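/- arXiv:1404.0843 — 2 statements merged into one kernel-verified Lean document; each statement's English description precedes it below -/
import Mathlib

section
/- Transfer theorem, regions: if the game (A, O) is Y-greedy, then for each player i, the winning region of Player i in (A, O) equals the winning region of Player i in the first cycle game (A, O_FC(Y)(A)). -/
structure Arena (U : Type) where
  V : Type
  finV : Fintype V
  decV : DecidableEq V
  owner : V → Fin 2
  E : V → V → Prop
  nodead : ∀ v, ∃ w, E v w
  lab : V → V → U

namespace Arena

variable {U : Type} (A : Arena U)

instance : DecidableEq A.V := A.decV
instance : Fintype A.V := A.finV

/-- An infinite play: consecutive vertices are connected by edges. -/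
def IsPlay (π : ℕ → A.V) : Prop := ∀ j, A.E (π j) (π (j + 1))

/-- A strategy: given the history (past vertices, in order) and the current
vertex, produce the next vertex. -/
abbrev Strategy := List A.V → A.V → A.V

def Legal (S : A.Strategy) : Prop := ∀ h v, A.E v (S h v)

def Memoryless (S : A.Strategy) : Prop := ∀ h h' v, S h v = S h' v

/-- The history of a play: the first `j` vertices. -/
def hist (π : ℕ → A.V) (j : ℕ) : List A.V := (List.range j).map π

/-- A play is consistent with a strategy of player `i`. -/
def Consistent (i : Fin 2) (S : A.Strategy) (π : ℕ → A.V) : Prop :=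
  ∀ j, A.owner (π j) = i → π (j + 1) = S (A.hist π j) (π j)

/-- One step of the stack-based cycles-decomposition algorithm.  The stack is
a list of vertices (a simple path).  Pushing vertex `v`: if `v` already occurs
on the stack, the cycle from (the first occurrence of) `v` to the top is popped
and output (represented by its list of vertices, starting with `v`, with an
implicit closing edge back to `v`); otherwise `v` is pushed. -/
def step (s : List A.V) (v : A.V) : List A.V × Option (List A.V) :=
  if v ∈ s then (s.take (s.idxOf v + 1), some (s.drop (s.idxOf v)))
  else (s ++ [v], none)

/-- The stack after processing vertices `π 0, …, π n`. -/
def stackAt (π : ℕ → A.V) : ℕ → List A.V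
  | 0 => [π 0]
  | n + 1 => (A.step (stackAt π n) (π (n + 1))).1

/-- The cycle (if any) output while processing vertex `π (n+1)`. -/
def cycleAt (π : ℕ → A.V) (n : ℕ) : Option (List A.V) :=
  (A.step (A.stackAt π n) (π (n + 1))).2

/-- The labels of the edges of a cycle `[v, w₁, …, w_k]`, i.e. of the edges
`(v,w₁)(w₁,w₂)…(w_k,v)`. -/
def cycLabels : List A.V → List U
  | [] => []
  | v :: rest => List.zipWith A.lab (v :: rest) (rest ++ [v])

def Objective := (ℕ → A.V) → Prop

/-- First-cycle objective: the first cycle output by the decomposition has its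
labels in `Y`. -/
def FCObj (Y : Set (List U)) : A.Objective := fun π =>
  ∃ n c, A.cycleAt π n = some c ∧ (∀ m, m < n → A.cycleAt π m = none) ∧
    A.cycLabels c ∈ Y

/-- All-cycles objective: every cycle of the decomposition has labels in `Y`. -/
def ACObj (Y : Set (List U)) : A.Objective := fun π =>
  ∀ n c, A.cycleAt π n = some c → A.cycLabels c ∈ Y

def shift (π : ℕ → A.V) (k : ℕ) : ℕ → A.V := fun n => π (n + k)

/-- Suffix all-cycles objective: some suffix of the play has all cycles of its
decomposition with labels in `Y`. -/
def EACObj (Y : Set (List U)) : A.Objective := fun π =>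
  ∃ k, A.ACObj Y (A.shift π k)

/-- The objective induced by a winning condition `W ⊆ U^ω`. -/
def WObj (W : Set (ℕ → U)) : A.Objective := fun π =>
  (fun j => A.lab (π j) (π (j + 1))) ∈ W

/-- `S` is a winning strategy for player `i` from `v` for objective `O`. -/
def WinsFrom (O : A.Objective) (i : Fin 2) (S : A.Strategy) (v : A.V) : Prop :=
  A.Legal S ∧ ∀ π, A.IsPlay π → π 0 = v → A.Consistent i S π →
    (if i = 0 then O π else ¬ O π)

def WinRegion (O : A.Objective) (i : Fin 2) : Set A.V :=
  { v | ∃ S, A.WinsFrom O i S v }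

def PointwiseMemoryless (O : A.Objective) (i : Fin 2) : Prop :=
  ∀ v ∈ A.WinRegion O i, ∃ S, A.Memoryless S ∧ A.WinsFrom O i S v

def UniformMemoryless (O : A.Objective) (i : Fin 2) : Prop :=
  ∃ S, A.Memoryless S ∧ ∀ v ∈ A.WinRegion O i, A.WinsFrom O i S v

def Determined (O : A.Objective) : Prop :=
  ∀ v, v ∈ A.WinRegion O 0 ∨ v ∈ A.WinRegion O 1

def PointwiseMemDet (O : A.Objective) : Prop :=
  A.Determined O ∧ A.PointwiseMemoryless O 0 ∧ A.PointwiseMemoryless O 1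

def UniformMemDet (O : A.Objective) : Prop :=
  A.Determined O ∧ A.UniformMemoryless O 0 ∧ A.UniformMemoryless O 1

/-- The game `(A, O)` is `Y`-greedy. -/
def YGreedy (Y : Set (List U)) (O : A.Objective) : Prop :=
  (∀ π, A.IsPlay π → A.ACObj Y π → O π) ∧
  (∀ π, A.IsPlay π → A.ACObj Yᶜ π → ¬ O π)

/-- The arena `A` is `Y`-unambiguous. -/
def Unambiguous (Y : Set (List U)) : Prop :=
  ∀ π, A.IsPlay π → ¬ (A.EACObj Y π ∧ A.EACObj Yᶜ π)

/-- All vertices belong to player `i`. -/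
def SolitaireFor (i : Fin 2) : Prop := ∀ v, A.owner v = i

end Arena

/-- A cycle property is closed under cyclic permutations. -/
def ClosedCyc {U : Type} (Y : Set (List U)) : Prop :=
  ∀ (a : U) (b : List U), (a :: b) ∈ Y → (b ++ [a]) ∈ Y

/-- A cycle property is closed under concatenation. -/
def ClosedConcat {U : Type} (Y : Set (List U)) : Prop :=
  ∀ a b, a ∈ Y → b ∈ Y → (a ++ b) ∈ Y

/-- A Moore machine generating a strategy on arena `A`. -/
structure Moore {U : Type} (A : Arena U) where
  M : Type
  finM : Fintype M
  m0 : M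
  upd : A.V → M → M
  out : A.V → M → A.V

namespace Moore

variable {U : Type} {A : Arena U}

def card (Mm : Moore A) : ℕ := @Fintype.card Mm.M Mm.finM

/-- Memory state reached after reading a history. -/
def run (Mm : Moore A) (h : List A.V) : Mm.M :=
  h.foldl (fun m x => Mm.upd x m) Mm.m0

/-- The Moore machine generates strategy `S`. -/
def Generates (Mm : Moore A) (S : A.Strategy) : Prop :=
  ∀ h x, S h x = Mm.out x (Mm.run h)

end Moore

/-!
The first-cycle game is finite: the stack of the cycles decomposition is a simple path, so the
first cycle closes within `|V|` moves, and backward induction decides from every vertex which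
player can force the first cycle into `Y` (resp. into `Yᶜ`). The winner can do more. Playing
according to the current stack only, after each cycle is popped the stack is a prefix of an
earlier one, from which the winning certificate still holds, so the same strategy forces *every*
cycle into `Y` (resp. `Yᶜ`). In a `Y`-greedy game such a strategy is winning, so all `Y`-greedy
games, the first-cycle game among them, have the same winner from every vertex.
-/

namespace Arena

variable {U : Type} {A : Arena U}

section Stack

variable (π : ℕ → A.V) (n : ℕ)

lemma stackAt_succ_of_mem (h : π (n + 1) ∈ A.stackAt π n) :
    A.stackAt π (n + 1) = (A.stackAt π n).take ((A.stackAt π n).idxOf (π (n + 1)) + 1) := by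
  simp [stackAt, step, h]

lemma stackAt_succ_of_not_mem (h : π (n + 1) ∉ A.stackAt π n) :
    A.stackAt π (n + 1) = A.stackAt π n ++ [π (n + 1)] := by
  simp [stackAt, step, h]

lemma cycleAt_of_mem (h : π (n + 1) ∈ A.stackAt π n) :
    A.cycleAt π n = some ((A.stackAt π n).drop ((A.stackAt π n).idxOf (π (n + 1)))) := by
  simp [cycleAt, step, h]

lemma cycleAt_of_not_mem (h : π (n + 1) ∉ A.stackAt π n) : A.cycleAt π n = none := by
  simp [cycleAt, step, h]

lemma stackAt_getLast? : (A.stackAt π n).getLast? = some (π n) := by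
  induction n with
  | zero => rfl
  | succ n ih =>
    by_cases h : π (n + 1) ∈ A.stackAt π n
    · have hidx := List.idxOf_lt_length_iff.mpr h
      rw [stackAt_succ_of_mem π n h, List.take_add_one, List.getElem?_eq_getElem hidx,
        List.getElem_idxOf hidx]
      exact List.getLast?_concat
    · rw [stackAt_succ_of_not_mem π n h]
      exact List.getLast?_concat

lemma stackAt_ne_nil : A.stackAt π n ≠ [] := by
  intro hnil
  simpa [hnil] using stackAt_getLast? π n

lemma stackAt_getLast : (A.stackAt π n).getLast (stackAt_ne_nil π n) = π n := by
  simpa [List.getLast?_eq_some_getLast (stackAt_ne_nil π n)] using stackAt_getLast? π n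

lemma stackAt_nodup : (A.stackAt π n).Nodup := by
  induction n with
  | zero => simp [stackAt]
  | succ n ih =>
    by_cases h : π (n + 1) ∈ A.stackAt π n
    · rw [stackAt_succ_of_mem π n h]
      exact (List.take_sublist _ _).nodup ih
    · rw [stackAt_succ_of_not_mem π n h]
      exact ih.append (List.nodup_singleton _) (by simpa using h)

lemma stackAt_length_le_card : (A.stackAt π n).length ≤ Fintype.card A.V :=
  (stackAt_nodup π n).length_le_card

lemma stackAt_length_of_forall_cycleAt_eq_none (h : ∀ m < n, A.cycleAt π m = none) :
    (A.stackAt π n).length = n + 1 := by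
  induction n with
  | zero => rfl
  | succ n ih =>
    have hn : π (n + 1) ∉ A.stackAt π n := fun hmem => by
      simpa [cycleAt_of_mem π n hmem] using h n n.lt_succ_self
    rw [stackAt_succ_of_not_mem π n hn, List.length_append, ih fun m hm => h m (by omega)]
    rfl

lemma exists_first_cycle : ∃ n c, A.cycleAt π n = some c ∧ ∀ m < n, A.cycleAt π m = none := by
  have hex : ∃ n, (A.cycleAt π n).isSome := by
    by_contra! hnone
    simp only [Bool.not_eq_true, Option.isSome_eq_false_iff, Option.isNone_iff_eq_none] at hnone
    have := stackAt_length_of_forall_cycleAt_eq_none π (Fintype.card A.V) fun m _ => hnone m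
    have := stackAt_length_le_card π (Fintype.card A.V)
    omega
  obtain ⟨c, hc⟩ := Option.isSome_iff_exists.mp (Nat.find_spec hex)
  exact ⟨Nat.find hex, c, hc, fun m hm => by simpa using Nat.find_min hex hm⟩

end Stack

lemma ACObj.fcObj {Z : Set (List U)} {π : ℕ → A.V} (h : A.ACObj Z π) : A.FCObj Z π :=
  let ⟨n, c, hc, hmin⟩ := exists_first_cycle π
  ⟨n, c, hc, hmin, h n c hc⟩

lemma ACObj.not_fcObj {Z : Set (List U)} {π : ℕ → A.V} (h : A.ACObj Zᶜ π) : ¬ A.FCObj Z π :=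
  fun ⟨n, c, hc, _, hZ⟩ => h n c hc hZ

lemma fcObj_yGreedy (Y : Set (List U)) : A.YGreedy Y (A.FCObj Y) :=
  ⟨fun _ _ h => h.fcObj, fun _ _ h => h.not_fcObj⟩

lemma hist_succ (π : ℕ → A.V) (n : ℕ) : A.hist π (n + 1) = A.hist π n ++ [π n] := by
  simp [hist, List.range_succ]

variable (A) in
def stackOf : List A.V → A.V → List A.V
  | [], x => [x]
  | y :: ys, x => (ys ++ [x]).foldl (fun s v => (A.step s v).1) [y]

lemma stackOf_append_singleton (h : List A.V) (x y : A.V) :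
    A.stackOf (h ++ [x]) y = (A.step (A.stackOf h x) y).1 := by
  cases h with
  | nil => rfl
  | cons a l => simp [stackOf]

lemma stackOf_hist (π : ℕ → A.V) (n : ℕ) : A.stackOf (A.hist π n) (π n) = A.stackAt π n := by
  induction n with
  | zero => rfl
  | succ n ih => rw [hist_succ, stackOf_append_singleton, ih, stackAt]

variable (A) in
noncomputable def stackStrategy (Q : List A.V → A.V → Prop) : A.Strategy := fun h x =>
  open Classical in
  if hw : ∃ w, A.E x w ∧ Q (A.stackOf h x) w then hw.choose else (A.nodead x).choose

lemma stackStrategy_legal (Q : List A.V → A.V → Prop) : A.Legal (A.stackStrategy Q) := by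
  intro h x
  unfold stackStrategy
  split
  · next hw => exact hw.choose_spec.1
  · exact (A.nodead x).choose_spec

lemma stackStrategy_spec {Q : List A.V → A.V → Prop} {h : List A.V} {x : A.V}
    (hw : ∃ w, A.E x w ∧ Q (A.stackOf h x) w) :
    Q (A.stackOf h x) (A.stackStrategy Q h x) := by
  classical
  simp only [stackStrategy, dif_pos hw]
  exact hw.choose_spec.2

def PrefixInv (W : List A.V → A.V → Prop) (s : List A.V) : Prop :=
  ∀ k (hk : k < s.length), W (s.take (k + 1)) s[k]

lemma PrefixInv.getLast {W : List A.V → A.V → Prop} {s : List A.V} (h : PrefixInv W s)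
    (hs : s ≠ []) : W s (s.getLast hs) := by
  have hk : s.length - 1 < s.length := by
    have := List.length_pos_iff.mpr hs
    omega
  simpa [List.getLast_eq_getElem, Nat.sub_add_cancel (List.length_pos_iff.mpr hs)] using h _ hk

lemma PrefixInv.take {W : List A.V → A.V → Prop} {s : List A.V} (h : PrefixInv W s) (m : ℕ) :
    PrefixInv W (s.take m) := by
  intro k hk
  rw [List.length_take] at hk
  rw [List.getElem_take, List.take_take, Nat.min_eq_left (by omega)]
  exact h k (by omega)

lemma PrefixInv.concat {W : List A.V → A.V → Prop} {s : List A.V} {w : A.V} (h : PrefixInv W s)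
    (hw : W (s ++ [w]) w) : PrefixInv W (s ++ [w]) := by
  intro k hk
  rw [List.length_append, List.length_singleton] at hk
  rcases Nat.lt_or_eq_of_le (Nat.le_of_lt_succ hk) with hks | rfl
  · rw [List.getElem_append_left hks, List.take_append_of_le_length (by omega)]
    exact h k hks
  · simpa [List.take_of_length_le] using hw

variable (A) in
structure StackCertificate (i : Fin 2) (Z : Set (List U)) (W Q : List A.V → A.V → Prop) :
    Prop where
  exists_move : ∀ s t, W s t → s.length ≤ Fintype.card A.V → A.owner t = i →
    ∃ w, A.E t w ∧ Q s w
  forall_move : ∀ s t, W s t → s.length ≤ Fintype.card A.V → A.owner t ≠ i →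
    ∀ w, A.E t w → Q s w
  push : ∀ s w, Q s w → w ∉ s → W (s ++ [w]) w
  pop : ∀ s w, Q s w → w ∈ s → A.cycLabels (s.drop (s.idxOf w)) ∈ Z

namespace StackCertificate

variable {i : Fin 2} {Z : Set (List U)} {W Q : List A.V → A.V → Prop}
  {π : ℕ → A.V}

lemma move_of_prefixInv (hC : A.StackCertificate i Z W Q) (hπ : A.IsPlay π)
    (hcons : A.Consistent i (A.stackStrategy Q) π) {t : ℕ} (hW : PrefixInv W (A.stackAt π t)) :
    Q (A.stackAt π t) (π (t + 1)) := by
  have hWt : W (A.stackAt π t) (π t) := stackAt_getLast π t ▸ hW.getLast (stackAt_ne_nil π t)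
  have hlen := stackAt_length_le_card π t
  by_cases ho : A.owner (π t) = i
  · have hmove := hC.exists_move _ _ hWt hlen ho
    rw [← stackOf_hist] at hmove ⊢
    rw [hcons t ho]
    exact stackStrategy_spec hmove
  · exact hC.forall_move _ _ hWt hlen ho _ (hπ t)

lemma prefixInv_stackAt (hC : A.StackCertificate i Z W Q) (hπ : A.IsPlay π)
    (hcons : A.Consistent i (A.stackStrategy Q) π) (hv : W [π 0] (π 0)) (t : ℕ) :
    PrefixInv W (A.stackAt π t) := by
  induction t with
  | zero =>
    intro k hk
    obtain rfl : k = 0 := by simpa [stackAt] using hk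
    exact hv
  | succ t ih =>
    have hQ := hC.move_of_prefixInv hπ hcons ih
    by_cases h : π (t + 1) ∈ A.stackAt π t
    · rw [stackAt_succ_of_mem π t h]
      exact ih.take _
    · rw [stackAt_succ_of_not_mem π t h]
      exact ih.concat (hC.push _ _ hQ h)

lemma acObj (hC : A.StackCertificate i Z W Q) (hπ : A.IsPlay π)
    (hcons : A.Consistent i (A.stackStrategy Q) π) (hv : W [π 0] (π 0)) : A.ACObj Z π := by
  intro n c hc
  by_cases h : π (n + 1) ∈ A.stackAt π n
  · rw [cycleAt_of_mem π n h, Option.some.injEq] at hc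
    exact hc ▸ hC.pop _ _ (hC.move_of_prefixInv hπ hcons (hC.prefixInv_stackAt hπ hcons hv n)) h
  · simp [cycleAt_of_not_mem π n h] at hc

end StackCertificate

variable (A) in
/-- Backward induction for the first-cycle game: Player 0 can force, within `n` moves from the
stack `s` with top `t`, that the first cycle closed has labels in `Y`. -/
def fcWins (Y : Set (List U)) : ℕ → List A.V → A.V → Prop
  | 0, _, _ => False
  | n + 1, s, t =>
    if A.owner t = 0 then
      ∃ w, A.E t w ∧ (if w ∈ s then A.cycLabels (s.drop (s.idxOf w)) ∈ Y
                      else fcWins Y n (s ++ [w]) w)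
    else
      ∀ w, A.E t w → (if w ∈ s then A.cycLabels (s.drop (s.idxOf w)) ∈ Y
                      else fcWins Y n (s ++ [w]) w)

variable (A) in
def fcGoodMove (Y : Set (List U)) (s : List A.V) (w : A.V) : Prop :=
  if w ∈ s then A.cycLabels (s.drop (s.idxOf w)) ∈ Y
  else A.fcWins Y (Fintype.card A.V - s.length) (s ++ [w]) w

variable (A) in
/-- With fuel `|V| + 1 - |s|` the first-cycle game never runs out of fuel. -/
abbrev fcWinsFrom (Y : Set (List U)) (s : List A.V) (t : A.V) : Prop :=
  A.fcWins Y (Fintype.card A.V + 1 - s.length) s t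

lemma fcWinsFrom_iff {Y : Set (List U)} {s : List A.V} {t : A.V}
    (hlen : s.length ≤ Fintype.card A.V) :
    A.fcWinsFrom Y s t ↔ if A.owner t = 0 then ∃ w, A.E t w ∧ A.fcGoodMove Y s w
      else ∀ w, A.E t w → A.fcGoodMove Y s w := by
  rw [fcWinsFrom, show Fintype.card A.V + 1 - s.length = Fintype.card A.V - s.length + 1 by omega]
  rfl

lemma fcWinsFrom_append_singleton {Y : Set (List U)} {s : List A.V} {w : A.V} (hw : w ∉ s) :
    A.fcWinsFrom Y (s ++ [w]) w ↔ A.fcGoodMove Y s w := by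
  rw [fcGoodMove, if_neg hw, fcWinsFrom, List.length_append, List.length_singleton,
    Nat.add_sub_add_right]

lemma stackCertificate_fcWins (Y : Set (List U)) :
    A.StackCertificate 0 Y (A.fcWinsFrom Y) (A.fcGoodMove Y) where
  exists_move s t hW hlen ho := by simpa [fcWinsFrom_iff hlen, ho] using hW
  forall_move s t hW hlen ho := by simpa [fcWinsFrom_iff hlen, ho] using hW
  push s w hQ hw := (fcWinsFrom_append_singleton hw).mpr hQ
  pop s w hQ hw := by simpa [fcGoodMove, hw] using hQ

lemma stackCertificate_not_fcWins (Y : Set (List U)) :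
    A.StackCertificate 1 Yᶜ (fun s t => ¬ A.fcWinsFrom Y s t)
      (fun s w => ¬ A.fcGoodMove Y s w) where
  exists_move s t hW hlen ho := by
    have ho' : A.owner t ≠ 0 := by simp [ho]
    simpa [fcWinsFrom_iff hlen, ho'] using hW
  forall_move s t hW hlen ho := by
    have ho' : A.owner t = 0 := by omega
    simpa [fcWinsFrom_iff hlen, ho'] using hW
  push s w hQ hw := mt (fcWinsFrom_append_singleton hw).mp hQ
  pop s w hQ hw := by simpa [fcGoodMove, hw] using hQ

lemma YGreedy.winsFrom_zero {Y : Set (List U)} {O : A.Objective} (hO : A.YGreedy Y O)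
    {S : A.Strategy} {v : A.V} (hS : A.Legal S)
    (hAC : ∀ π, A.IsPlay π → π 0 = v → A.Consistent 0 S π → A.ACObj Y π) :
    A.WinsFrom O 0 S v :=
  ⟨hS, fun π hπ h0 hc => by simpa using hO.1 π hπ (hAC π hπ h0 hc)⟩

lemma YGreedy.winsFrom_one {Y : Set (List U)} {O : A.Objective} (hO : A.YGreedy Y O)
    {S : A.Strategy} {v : A.V} (hS : A.Legal S)
    (hAC : ∀ π, A.IsPlay π → π 0 = v → A.Consistent 1 S π → A.ACObj Yᶜ π) :
    A.WinsFrom O 1 S v :=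
  ⟨hS, fun π hπ h0 hc => by simpa using hO.2 π hπ (hAC π hπ h0 hc)⟩

lemma exists_player_forall_yGreedy (Y : Set (List U)) (v : A.V) :
    ∃ i, ∀ O, A.YGreedy Y O → v ∈ A.WinRegion O i := by
  by_cases hv : A.fcWinsFrom Y [v] v
  · have hC := A.stackCertificate_fcWins Y
    exact ⟨0, fun O hO => ⟨_, hO.winsFrom_zero (stackStrategy_legal _)
      fun π hπ h0 hc => hC.acObj hπ hc (h0 ▸ hv)⟩⟩
  · have hC := A.stackCertificate_not_fcWins Y
    exact ⟨1, fun O hO => ⟨_, hO.winsFrom_one (stackStrategy_legal _)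
      fun π hπ h0 hc => hC.acObj hπ hc (h0 ▸ hv)⟩⟩

lemma exists_play_of_moves (f : List A.V → A.V → A.V) (v : A.V) :
    ∃ π : ℕ → A.V, π 0 = v ∧ ∀ n, π (n + 1) = f (A.hist π n) (π n) := by
  let state : ℕ → List A.V × A.V := fun n =>
    Nat.rec ([], v) (fun _ p => (p.1 ++ [p.2], f p.1 p.2)) n
  have hhist : ∀ n, (state n).1 = A.hist (fun k => (state k).2) n := by
    intro n
    induction n with
    | zero => rfl
    | succ n ih => rw [hist_succ, ← ih]
  exact ⟨fun n => (state n).2, rfl, fun n => by rw [← hhist]⟩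

lemma not_mem_winRegion_one_of_zero {O : A.Objective} {v : A.V} (h0 : v ∈ A.WinRegion O 0) :
    v ∉ A.WinRegion O 1 := by
  rintro ⟨S₁, hL₁, hW₁⟩
  obtain ⟨S₀, hL₀, hW₀⟩ := h0
  obtain ⟨π, hπ0, hπ⟩ :=
    A.exists_play_of_moves (fun h x => if A.owner x = 0 then S₀ h x else S₁ h x) v
  have hplay : A.IsPlay π := fun j => by
    rw [hπ j]
    split
    · exact hL₀ _ _
    · exact hL₁ _ _
  have hwin₀ := hW₀ π hplay hπ0 fun j hj => by rw [hπ j, if_pos hj]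
  have hwin₁ := hW₁ π hplay hπ0 fun j hj => by rw [hπ j, if_neg (by simp [hj])]
  simp only [if_true, Fin.one_eq_zero_iff] at hwin₀ hwin₁
  exact hwin₁ hwin₀

lemma eq_of_mem_winRegion {O : A.Objective} {v : A.V} {i j : Fin 2}
    (hi : v ∈ A.WinRegion O i) (hj : v ∈ A.WinRegion O j) : i = j := by
  fin_cases i <;> fin_cases j
  · rfl
  · exact absurd hj (not_mem_winRegion_one_of_zero hi)
  · exact absurd hi (not_mem_winRegion_one_of_zero hj)
  · rfl

theorem winRegion_eq_of_yGreedy {Y : Set (List U)} {O O' : A.Objective}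
    (hO : A.YGreedy Y O) (hO' : A.YGreedy Y O') (i : Fin 2) :
    A.WinRegion O i = A.WinRegion O' i := by
  ext v
  obtain ⟨j, hj⟩ := A.exists_player_forall_yGreedy Y v
  constructor
  · intro hv
    exact eq_of_mem_winRegion (hj O hO) hv ▸ hj O' hO'
  · intro hv
    exact eq_of_mem_winRegion (hj O' hO') hv ▸ hj O hO

end Arena

/-- Transfer, regions: the winning regions of a Y-greedy game
coincide with those of the first cycle game of Y. -/
theorem stmt6 {U : Type} (A : Arena U) (Y : Set (List U)) (O : A.Objective)
    (h : A.YGreedy Y O) (i : Fin 2) :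
    A.WinRegion O i = A.WinRegion (A.FCObj Y) i :=
  A.winRegion_eq_of_yGreedy h (A.fcObj_yGreedy Y) i
end

section
/- For every real ν, the ν-mean-payoff winning condition is cyc-MeanPayoff_ν-greedy on every arena: if every cycle in the cycles-decomposition of a play has average label at least ν, then limsup_{k→∞} (1/k)·Σ_{i=1}^k c_i ≥ ν for the label sequence c of the play; and if every cycle has average label strictly below ν (i.e., in the complement), the limsup average is below ν. -/
/-- `cyc-MeanPayoff_ν`: the average of the (nonempty) finite sequence is ≥ ν. -/
def cycMP (ν : ℝ) : Set (List ℝ) := { l | l ≠ [] ∧ ν ≤ l.sum / l.length }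

open Filter Topology

namespace List

variable {α M : Type*}

theorem sum_map_sub_const (l : List ℝ) (μ : ℝ) : (l.map (· - μ)).sum = l.sum - l.length * μ := by
  induction l with
  | nil => simp
  | cons a l ih => simp only [map_cons, sum_cons, ih, length_cons]; push_cast; ring

section AddCommMonoid

variable [AddCommMonoid M] (w : α → α → M)

def pathWeight (s : List α) : M := (zipWith w s s.tail).sum

def cycleWeight (c : List α) : M := (zipWith w c (c.rotate 1)).sum

@[simp] theorem pathWeight_nil : ([] : List α).pathWeight w = 0 := rfl

@[simp] theorem pathWeight_singleton (a : α) : [a].pathWeight w = 0 := rfl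

@[simp] theorem pathWeight_cons_cons (a b : α) (l : List α) :
    (a :: b :: l).pathWeight w = w a b + (b :: l).pathWeight w := by
  simp [pathWeight]

theorem pathWeight_append_cons : ∀ (l₁ : List α) (a : α) (l₂ : List α),
    (l₁ ++ a :: l₂).pathWeight w = (l₁ ++ [a]).pathWeight w + (a :: l₂).pathWeight w
  | [], _, _ => by simp
  | [x], a, l₂ => by simp
  | x :: y :: l₁, a, l₂ => by
    simp only [cons_append, pathWeight_cons_cons, add_assoc]
    rw [← cons_append, ← cons_append, pathWeight_append_cons (y :: l₁)]

theorem pathWeight_append_concat (l : List α) (a b : α) :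
    (l ++ [a] ++ [b]).pathWeight w = (l ++ [a]).pathWeight w + w a b := by
  rw [append_assoc, singleton_append, pathWeight_append_cons]
  simp

theorem cycleWeight_cons (a : α) (l : List α) :
    (a :: l).cycleWeight w = (a :: l ++ [a]).pathWeight w := by
  have hlen : (a :: l).length = (l ++ [a]).length := by simp
  simp only [cycleWeight, pathWeight, rotate_cons_succ, rotate_zero, cons_append, tail_cons]
  rw [← cons_append, ← append_nil (l ++ [a]), zipWith_append hlen]
  simp

end AddCommMonoid

theorem abs_pathWeight_le {w : α → α → ℝ} {B : ℝ} (hw : ∀ a b, |w a b| ≤ B) :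
    ∀ s : List α, |s.pathWeight w| ≤ s.tail.length * B
  | [] | [_] => by simp
  | a :: b :: l => by
    rw [pathWeight_cons_cons, tail_cons, length_cons, Nat.cast_succ, add_mul, one_mul, add_comm]
    exact (abs_add_le _ _).trans (add_le_add (abs_pathWeight_le hw (b :: l)) (hw a b))

theorem cycleWeight_sub_const (w : α → α → ℝ) (μ : ℝ) (c : List α) :
    c.cycleWeight (fun a b => w a b - μ) = c.cycleWeight w - c.length * μ := by
  rw [cycleWeight, ← map_zipWith (f := (· - μ)), sum_map_sub_const, length_zipWith, length_rotate,
    min_self, cycleWeight]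

end List

theorem Set.Finite.exists_lt_forall_le_of_forall_lt {α : Type*} [ConditionallyCompleteLinearOrder α]
    [NoMinOrder α] {s : Set α} (hs : s.Finite) {b : α} (h : ∀ x ∈ s, x < b) :
    ∃ b' < b, ∀ x ∈ s, x ≤ b' := by
  obtain ⟨a, ha⟩ := exists_lt b
  refine ⟨sSup (insert a s), ((hs.insert a).csSup_lt_iff (Set.insert_nonempty a s)).2 ?_,
    fun x hx => le_csSup (hs.insert a).bddAbove (Set.mem_insert_of_mem a hx)⟩
  rintro x (rfl | hx)
  exacts [ha, h x hx]

theorem abs_sum_range_div_le {f : ℕ → ℝ} {B : ℝ} (hf : ∀ i, |f i| ≤ B) (k : ℕ) :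
    |(∑ i ∈ Finset.range k, f i) / k| ≤ B := by
  rcases k.eq_zero_or_pos with rfl | hk
  · simpa using (abs_nonneg _).trans (hf 0)
  · have hk' : (0 : ℝ) < k := by exact_mod_cast hk
    rw [abs_div, Nat.abs_cast, div_le_iff₀ hk']
    calc |∑ i ∈ Finset.range k, f i| ≤ ∑ i ∈ Finset.range k, |f i| := Finset.abs_sum_le_sum_abs _ _
      _ ≤ k * B := by simpa using Finset.sum_le_card_nsmul (Finset.range k) _ _ fun i _ => hf i
      _ = B * k := mul_comm _ _

theorem le_limsup_div_of_forall_sub_le {a : ℕ → ℝ} {μ C : ℝ}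
    (hbdd : IsBoundedUnder (· ≤ ·) atTop fun k : ℕ => a k / k) (h : ∀ k : ℕ, μ * k - C ≤ a k) :
    μ ≤ limsup (fun k : ℕ => a k / k) atTop := by
  have hlim : Tendsto (fun k : ℕ => μ - C / k) atTop (𝓝 μ) := by
    simpa using tendsto_const_nhds.sub (tendsto_const_div_atTop_nhds_zero_nat C)
  rw [← hlim.limsup_eq]
  refine limsup_le_limsup (eventually_atTop.2 ⟨1, fun k hk => ?_⟩) hlim.isCoboundedUnder_le hbdd
  have hk : (0 : ℝ) < k := by exact_mod_cast hk
  rw [le_div_iff₀ hk, sub_mul, div_mul_cancel₀ _ hk.ne']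
  exact h k

theorem limsup_div_le_of_forall_le_add {a : ℕ → ℝ} {μ C : ℝ}
    (hbdd : IsBoundedUnder (· ≥ ·) atTop fun k : ℕ => a k / k) (h : ∀ k : ℕ, a k ≤ μ * k + C) :
    limsup (fun k : ℕ => a k / k) atTop ≤ μ := by
  have hlim : Tendsto (fun k : ℕ => μ + C / k) atTop (𝓝 μ) := by
    simpa using tendsto_const_nhds.add (tendsto_const_div_atTop_nhds_zero_nat C)
  rw [← hlim.limsup_eq]
  refine limsup_le_limsup (eventually_atTop.2 ⟨1, fun k hk => ?_⟩) hbdd.isCoboundedUnder_le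
    hlim.isBoundedUnder_le
  have hk : (0 : ℝ) < k := by exact_mod_cast hk
  rw [div_le_iff₀ hk, add_mul, div_mul_cancel₀ _ hk.ne']
  exact h k

namespace Arena

section Decomposition

variable {U : Type} {A : Arena U}

theorem step_of_not_mem {s : List A.V} {v : A.V} (h : v ∉ s) : A.step s v = (s ++ [v], none) :=
  if_neg h

theorem step_of_mem {s : List A.V} {v : A.V} (h : v ∈ s) :
    ∃ l₁ l₂, s = l₁ ++ v :: l₂ ∧ A.step s v = (l₁ ++ [v], some (v :: l₂)) := by
  have hi : s.idxOf v < s.length := List.idxOf_lt_length_iff.2 h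
  refine ⟨s.take (s.idxOf v), s.drop (s.idxOf v + 1), ?_, ?_⟩
  · conv_lhs => rw [← List.take_append_drop (s.idxOf v) s, List.drop_eq_getElem_cons hi,
      List.getElem_idxOf hi]
  · rw [step, if_pos h, List.take_succ_eq_append_getElem hi, List.drop_eq_getElem_cons hi,
      List.getElem_idxOf hi]

variable (π : ℕ → A.V)

theorem exists_stackAt_eq_concat : ∀ n, ∃ t, A.stackAt π n = t ++ [π n]
  | 0 => ⟨[], rfl⟩
  | n + 1 => by
    by_cases h : π (n + 1) ∈ A.stackAt π n
    · obtain ⟨l₁, l₂, -, hstep⟩ := step_of_mem h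
      exact ⟨l₁, by rw [stackAt, hstep]⟩
    · exact ⟨A.stackAt π n, by rw [stackAt, step_of_not_mem h]⟩

theorem nodup_stackAt : ∀ n, (A.stackAt π n).Nodup
  | 0 => List.nodup_singleton _
  | n + 1 => by
    by_cases h : π (n + 1) ∈ A.stackAt π n
    · obtain ⟨l₁, l₂, hs, hstep⟩ := step_of_mem h
      rw [stackAt, hstep]
      refine (nodup_stackAt n).sublist ?_
      rw [hs]
      exact ((List.nil_sublist l₂).cons_cons _).append_left l₁
    · rw [stackAt, step_of_not_mem h]
      exact (nodup_stackAt n).append (List.nodup_singleton _) (by simpa using h)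

theorem nodup_of_cycleAt_eq_some {m : ℕ} {c : List A.V} (hc : A.cycleAt π m = some c) :
    c.Nodup := by
  by_cases h : π (m + 1) ∈ A.stackAt π m
  · obtain ⟨l₁, l₂, hs, hstep⟩ := step_of_mem h
    rw [cycleAt, hstep, Option.some_inj] at hc
    subst hc
    exact (nodup_stackAt π m).sublist (hs ▸ List.sublist_append_right l₁ _)
  · simp [cycleAt, step_of_not_mem h] at hc

theorem sum_weight_eq_sum_cycleWeight_add_pathWeight {M : Type*} [AddCommMonoid M]
    (w : A.V → A.V → M) (n : ℕ) :
    ∑ i ∈ Finset.range n, w (π i) (π (i + 1)) =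
      ∑ m ∈ Finset.range n, (A.cycleAt π m).elim 0 (·.cycleWeight w) +
        (A.stackAt π n).pathWeight w := by
  induction n with
  | zero => simp [stackAt]
  | succ n ih =>
    obtain ⟨t, ht⟩ := exists_stackAt_eq_concat π n
    have hpush : (A.stackAt π n ++ [π (n + 1)]).pathWeight w =
        (A.stackAt π n).pathWeight w + w (π n) (π (n + 1)) := by
      rw [ht, List.pathWeight_append_concat]
    rw [Finset.sum_range_succ, Finset.sum_range_succ, ih, add_assoc, ← hpush, add_assoc]
    congr 1
    by_cases h : π (n + 1) ∈ A.stackAt π n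
    · obtain ⟨l₁, l₂, hs, hstep⟩ := step_of_mem h
      rw [cycleAt, stackAt, hstep, Option.elim_some, List.cycleWeight_cons, hs, List.append_assoc,
        List.cons_append, List.pathWeight_append_cons, add_comm]
    · rw [cycleAt, stackAt, step_of_not_mem h, Option.elim_none, zero_add]

end Decomposition

section MeanPayoff

variable (A : Arena ℝ) (π : ℕ → A.V)

theorem exists_abs_lab_le : ∃ B, ∀ a b, |A.lab a b| ≤ B := by
  obtain ⟨B, hB⟩ := Finite.exists_le fun p : A.V × A.V => |A.lab p.1 p.2|
  exact ⟨B, fun a b => hB (a, b)⟩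

theorem cycLabels_eq_zipWith (c : List A.V) :
    A.cycLabels c = List.zipWith A.lab c (c.rotate 1) := by
  cases c <;> simp [cycLabels]

theorem sum_cycLabels (c : List A.V) : (A.cycLabels c).sum = c.cycleWeight A.lab := by
  rw [cycLabels_eq_zipWith, List.cycleWeight]

theorem length_cycLabels (c : List A.V) : (A.cycLabels c).length = c.length := by
  simp [cycLabels_eq_zipWith]

theorem mul_length_le_sum_cycLabels {ν : ℝ} {c : List A.V} (h : A.cycLabels c ∈ cycMP ν) :
    ν * c.length ≤ (A.cycLabels c).sum := by
  obtain ⟨hne, hle⟩ := h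
  have hpos : (0 : ℝ) < c.length := by
    exact_mod_cast A.length_cycLabels c ▸ List.length_pos_iff.2 hne
  rwa [length_cycLabels, le_div_iff₀ hpos] at hle

/-- The difference is the weight of the path on the stack, which has at most `|V|` vertices. -/
theorem exists_abs_sum_lab_sub_le (μ : ℝ) : ∃ C, ∀ k : ℕ,
    |∑ i ∈ Finset.range k, A.lab (π i) (π (i + 1)) - μ * k -
      ∑ m ∈ Finset.range k,
        (A.cycleAt π m).elim 0 (fun c => (A.cycLabels c).sum - μ * c.length)| ≤ C := by
  obtain ⟨B, hB⟩ := A.exists_abs_lab_le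
  have hw : ∀ a b, |A.lab a b - μ| ≤ B + |μ| := fun a b =>
    (abs_sub _ _).trans (add_le_add_left (hB a b) _)
  refine ⟨Fintype.card A.V * (B + |μ|), fun k => ?_⟩
  have hcycle : ∀ m, (A.cycleAt π m).elim 0 (·.cycleWeight fun a b => A.lab a b - μ) =
      (A.cycleAt π m).elim 0 (fun c => (A.cycLabels c).sum - μ * c.length) := fun m => by
    cases A.cycleAt π m <;> simp [List.cycleWeight_sub_const, sum_cycLabels, mul_comm]
  have hsplit := A.sum_weight_eq_sum_cycleWeight_add_pathWeight π (fun a b => A.lab a b - μ) k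
  simp only [Finset.sum_sub_distrib, Finset.sum_const, Finset.card_range, nsmul_eq_mul,
    hcycle] at hsplit
  have hlen : (A.stackAt π k).tail.length ≤ Fintype.card A.V := by
    rw [List.length_tail]
    exact (Nat.sub_le _ _).trans (nodup_stackAt π k).length_le_card
  calc _ = |(A.stackAt π k).pathWeight fun a b => A.lab a b - μ| := by
        congr 1
        linarith
    _ ≤ (A.stackAt π k).tail.length * (B + |μ|) := List.abs_pathWeight_le hw _
    _ ≤ Fintype.card A.V * (B + |μ|) :=
        mul_le_mul_of_nonneg_right (by exact_mod_cast hlen) ((abs_nonneg _).trans (hw (π 0) (π 0)))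

theorem exists_sub_le_sum_lab {μ : ℝ}
    (h : ∀ m c, A.cycleAt π m = some c → μ * c.length ≤ (A.cycLabels c).sum) :
    ∃ C, ∀ k : ℕ, μ * k - C ≤ ∑ i ∈ Finset.range k, A.lab (π i) (π (i + 1)) := by
  obtain ⟨C, hC⟩ := A.exists_abs_sum_lab_sub_le π μ
  refine ⟨C, fun k => ?_⟩
  have hexcess : 0 ≤ ∑ m ∈ Finset.range k,
      (A.cycleAt π m).elim 0 (fun c => (A.cycLabels c).sum - μ * c.length) :=
    Finset.sum_nonneg fun m _ => by
      cases hc : A.cycleAt π m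
      exacts [le_rfl, sub_nonneg.2 (h m _ hc)]
  linarith [(abs_le.1 (hC k)).1]

theorem exists_sum_lab_le_add {μ : ℝ}
    (h : ∀ m c, A.cycleAt π m = some c → (A.cycLabels c).sum ≤ μ * c.length) :
    ∃ C, ∀ k : ℕ, ∑ i ∈ Finset.range k, A.lab (π i) (π (i + 1)) ≤ μ * k + C := by
  obtain ⟨C, hC⟩ := A.exists_abs_sum_lab_sub_le π μ
  refine ⟨C, fun k => ?_⟩
  have hexcess : ∑ m ∈ Finset.range k,
      (A.cycleAt π m).elim 0 (fun c => (A.cycLabels c).sum - μ * c.length) ≤ 0 :=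
    Finset.sum_nonpos fun m _ => by
      cases hc : A.cycleAt π m
      exacts [le_rfl, sub_nonpos.2 (h m _ hc)]
  linarith [(abs_le.1 (hC k)).2]

/-- Cycles of the decomposition are simple, so only finitely many averages occur; this gives a
uniform gap below `ν`. -/
theorem exists_lt_forall_sum_cycLabels_le {ν : ℝ} (h : A.ACObj (cycMP ν)ᶜ π) :
    ∃ ν' < ν, ∀ m c, A.cycleAt π m = some c → (A.cycLabels c).sum ≤ ν' * c.length := by
  let avg : List A.V → ℝ := fun c => (A.cycLabels c).sum / c.length
  let S := {c : List A.V | c.Nodup ∧ c ≠ [] ∧ A.cycLabels c ∉ cycMP ν}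
  have hfin : (avg '' S).Finite :=
    ((List.finite_length_le A.V (Fintype.card A.V)).subset fun c hc => hc.1.length_le_card).image _
  have hlt : ∀ x ∈ avg '' S, x < ν := by
    rintro _ ⟨c, ⟨-, hne, hc⟩, rfl⟩
    have hlab : A.cycLabels c ≠ [] := by
      rwa [← List.length_pos_iff, length_cycLabels, List.length_pos_iff]
    simpa [cycMP, hlab, avg, length_cycLabels] using hc
  obtain ⟨ν', hν', hle⟩ := hfin.exists_lt_forall_le_of_forall_lt hlt
  refine ⟨ν', hν', fun m c hc => ?_⟩
  rcases eq_or_ne c [] with rfl | hne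
  · simp [cycLabels]
  have hpos : (0 : ℝ) < c.length := by exact_mod_cast List.length_pos_iff.2 hne
  rw [← div_le_iff₀ hpos]
  exact hle _ ⟨c, ⟨nodup_of_cycleAt_eq_some π hc, hne, h m c hc⟩, rfl⟩

end MeanPayoff

end Arena

theorem stmt14_general (ν : ℝ) (A : Arena ℝ) (π : ℕ → A.V) :
    (A.ACObj (cycMP ν) π →
      ν ≤ Filter.limsup
        (fun k => (∑ i ∈ Finset.range k, A.lab (π i) (π (i + 1))) / k)
        Filter.atTop) ∧
    (A.ACObj (cycMP ν)ᶜ π →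
      Filter.limsup
        (fun k => (∑ i ∈ Finset.range k, A.lab (π i) (π (i + 1))) / k)
        Filter.atTop < ν) := by
  obtain ⟨B, hB⟩ := A.exists_abs_lab_le
  have hbdd := isBoundedUnder_le_abs.1 (isBoundedUnder_of (f := atTop)
    ⟨B, abs_sum_range_div_le fun i => hB (π i) (π (i + 1))⟩)
  refine ⟨fun hAC => ?_, fun hAC => ?_⟩
  · obtain ⟨C, hC⟩ := A.exists_sub_le_sum_lab π fun m c hc =>
      A.mul_length_le_sum_cycLabels (hAC m c hc)
    exact le_limsup_div_of_forall_sub_le hbdd.1 hC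
  · obtain ⟨ν', hν', hcyc⟩ := A.exists_lt_forall_sum_cycLabels_le π hAC
    obtain ⟨C, hC⟩ := A.exists_sum_lab_le_add π hcyc
    exact (limsup_div_le_of_forall_le_add hbdd.2 hC).trans_lt hν'

/-- the ν-mean-payoff condition is cyc-MeanPayoff_ν-greedy on
every arena. -/
theorem stmt14 (ν : ℝ) (A : Arena ℝ) (π : ℕ → A.V) (hπ : A.IsPlay π) :
    (A.ACObj (cycMP ν) π →
      ν ≤ Filter.limsup
        (fun k => (∑ i ∈ Finset.range k, A.lab (π i) (π (i + 1))) / k)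
        Filter.atTop) ∧
    (A.ACObj (cycMP ν)ᶜ π →
      Filter.limsup
        (fun k => (∑ i ∈ Finset.range k, A.lab (π i) (π (i + 1))) / k)
        Filter.atTop < ν) :=
  stmt14_general ν A π
end
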